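/- arXiv:2003.06180 — 2 statements merged into one kernel-verified Lean document; each statement's English description precedes it below -/
import Mathlib

section
/- Let A = ⊕_{ℓ≥0} A_ℓ be a graded ℂ-algebra, and let ω : A → A be a linear map sending A_{ℓ+1} to A_ℓ for all ℓ ≥ 0 and sending A_0 to 0. Fix an integer r ≥ 0 and elements a_ℓ ∈ A_ℓ for 0 ≤ ℓ ≤ m. Define b_k ∈ A_k (0 ≤ k ≤ m) by the identity Σ_{k=0}^m b_k = Σ_{ℓ=0}^m (1+ω)^{ℓ+r} a_ℓ (matching graded components). Then Σ_{ℓ=0}^m a_ℓ = Σ_{k=0}^m (1-ω)^{k+r} b_k. -/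
/-!
Expanding `(1 + ω) ^ (ℓ + r) a_ℓ` binomially, its degree-`k` component is
`(ℓ + r).choose (ℓ - k) • ω ^ (ℓ - k) a_ℓ`, so by uniqueness of graded components this is the
`ℓ`-contribution to `b_k`. Applying `(1 - ω) ^ (k + r)` and regrouping by `ℓ`, the contribution of
`a_ℓ` becomes `∑ⱼ (ℓ + r).choose j • (1 - ω) ^ (ℓ + r - j) ω ^ j a_ℓ`, which is the binomial
expansion of `((1 - ω) + ω) ^ (ℓ + r) a_ℓ = a_ℓ`. Both expansions may be cut off at `j = ℓ`
because `ω ^ (ℓ + 1)` kills `A_ℓ`.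
-/

open Finset

section

variable {K M : Type*} [Semiring K] [AddCommGroup M] [Module K M]

theorem Commute.add_pow_apply_of_pow_apply_eq_zero {f g : Module.End K M} (hfg : Commute f g)
    {N : ℕ} {x : M} (hx : (f ^ N) x = 0) (n : ℕ) :
    ((f + g) ^ n) x = ∑ j ∈ range N, n.choose j • (g ^ (n - j)) ((f ^ j) x) := by
  set term : ℕ → M := fun j => n.choose j • (g ^ (n - j)) ((f ^ j) x)
  have hvanish : ∀ j, n < j ∨ N ≤ j → term j = 0 := by
    rintro j (hnj | hNj)
    · simp only [term, Nat.choose_eq_zero_of_lt hnj, zero_smul]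
    · simp only [term, Module.End.pow_map_zero_of_le hNj hx, map_zero, smul_zero]
  calc ((f + g) ^ n) x = ∑ j ∈ range (n + 1), term j := by
        simp only [hfg.add_pow, LinearMap.coe_sum, Finset.sum_apply, Module.End.mul_apply,
          Module.End.natCast_apply, map_nsmul, term, (hfg.pow_pow _ _).eq]
    _ = ∑ j ∈ range (n + 1 + N), term j :=
        sum_subset (range_subset_range.2 (by omega)) fun j _ hj =>
          hvanish j (Or.inl (by simpa using hj))
    _ = ∑ j ∈ range N, term j :=
        (sum_subset (range_subset_range.2 (by omega)) fun j _ hj =>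
          hvanish j (Or.inr (by simpa using hj))).symm

theorem Module.End.one_add_pow_apply_of_pow_apply_eq_zero {f : Module.End K M} {N : ℕ} {x : M}
    (hx : (f ^ N) x = 0) (n : ℕ) :
    ((1 + f) ^ n) x = ∑ j ∈ range N, n.choose j • (f ^ j) x := by
  simp only [add_comm 1 f, (Commute.one_right f).add_pow_apply_of_pow_apply_eq_zero hx, one_pow,
    Module.End.one_apply]

theorem Module.End.sum_choose_smul_one_sub_pow_apply {f : Module.End K M} {N : ℕ} {x : M}
    (hx : (f ^ N) x = 0) (n : ℕ) :
    ∑ j ∈ range N, n.choose j • ((1 - f) ^ (n - j)) ((f ^ j) x) = x := by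
  have hcomm : Commute f (1 - f) := (Commute.one_right f).sub_right (Commute.refl f)
  rw [← hcomm.add_pow_apply_of_pow_apply_eq_zero hx, add_sub_cancel, one_pow, Module.End.one_apply]

variable {A : ℕ → Submodule K M} {ω : Module.End K M}

theorem Module.End.pow_apply_mem_sub (hω : ∀ ℓ : ℕ, ∀ x ∈ A (ℓ + 1), ω x ∈ A ℓ)
    (hω0 : ∀ x ∈ A 0, ω x = 0) {ℓ : ℕ} {x : M} (hx : x ∈ A ℓ) (j : ℕ) :
    (ω ^ j) x ∈ A (ℓ - j) := by
  induction j with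
  | zero => simpa using hx
  | succ j ih =>
    rw [pow_succ', Module.End.mul_apply]
    cases hd : ℓ - j with
    | zero =>
      rw [hω0 _ (hd ▸ ih)]
      exact zero_mem _
    | succ d =>
      rw [show ℓ - (j + 1) = d by omega]
      exact hω d _ (hd ▸ ih)

theorem Module.End.pow_succ_apply_eq_zero (hω : ∀ ℓ : ℕ, ∀ x ∈ A (ℓ + 1), ω x ∈ A ℓ)
    (hω0 : ∀ x ∈ A 0, ω x = 0) {ℓ : ℕ} {x : M} (hx : x ∈ A ℓ) :
    (ω ^ (ℓ + 1)) x = 0 := by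
  rw [pow_succ', Module.End.mul_apply]
  exact hω0 _ (by simpa using Module.End.pow_apply_mem_sub hω hω0 hx ℓ)

/-- The degree-`k` component of `∑ ℓ ≤ m, (1 + ω) ^ (ℓ + r) (a ℓ)`: the pair `(ℓ, j)` stands for
the binomial term `(ℓ + r).choose j • ω ^ j (a ℓ)`, of degree `ℓ - j`. -/
def transformComponent (ω : Module.End K M) (r m : ℕ) (a : ℕ → M) (k : ℕ) : M :=
  ∑ p ∈ (range (m + 1)).sigma (fun ℓ => range (ℓ + 1)) with p.1 - p.2 = k,
    (p.1 + r).choose p.2 • (ω ^ p.2) (a p.1)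

theorem sub_mem_range_of_mem_sigma_range {m : ℕ} {p : (_ : ℕ) × ℕ}
    (hp : p ∈ (range (m + 1)).sigma fun ℓ => range (ℓ + 1)) : p.1 - p.2 ∈ range (m + 1) := by
  simp only [mem_sigma, mem_range] at hp ⊢
  omega

theorem transformComponent_mem (hω : ∀ ℓ : ℕ, ∀ x ∈ A (ℓ + 1), ω x ∈ A ℓ)
    (hω0 : ∀ x ∈ A 0, ω x = 0) {a : ℕ → M} (ha : ∀ ℓ, a ℓ ∈ A ℓ) (r m k : ℕ) :
    transformComponent ω r m a k ∈ A k :=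
  Submodule.sum_mem _ fun p hp => by
    rw [← (mem_filter.1 hp).2]
    exact Submodule.smul_of_tower_mem _ _ (Module.End.pow_apply_mem_sub hω hω0 (ha _) _)

theorem sum_transformComponent (hω : ∀ ℓ : ℕ, ∀ x ∈ A (ℓ + 1), ω x ∈ A ℓ)
    (hω0 : ∀ x ∈ A 0, ω x = 0) {a : ℕ → M} (ha : ∀ ℓ, a ℓ ∈ A ℓ) (r m : ℕ) :
    ∑ k ∈ range (m + 1), transformComponent ω r m a k
      = ∑ ℓ ∈ range (m + 1), ((1 + ω) ^ (ℓ + r)) (a ℓ) := by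
  unfold transformComponent
  rw [sum_fiberwise_of_maps_to fun _ => sub_mem_range_of_mem_sigma_range, sum_sigma]
  exact sum_congr rfl fun ℓ _ => (Module.End.one_add_pow_apply_of_pow_apply_eq_zero
    (Module.End.pow_succ_apply_eq_zero hω hω0 (ha ℓ)) (ℓ + r)).symm

theorem sum_one_sub_pow_apply_transformComponent (hω : ∀ ℓ : ℕ, ∀ x ∈ A (ℓ + 1), ω x ∈ A ℓ)
    (hω0 : ∀ x ∈ A 0, ω x = 0) {a : ℕ → M} (ha : ∀ ℓ, a ℓ ∈ A ℓ) (r m : ℕ) :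
    ∑ k ∈ range (m + 1), ((1 - ω) ^ (k + r)) (transformComponent ω r m a k)
      = ∑ ℓ ∈ range (m + 1), a ℓ := by
  set S := (range (m + 1)).sigma fun ℓ => range (ℓ + 1)
  set term : (_ : ℕ) × ℕ → M := fun p => (p.1 + r).choose p.2 • (ω ^ p.2) (a p.1)
  calc ∑ k ∈ range (m + 1), ((1 - ω) ^ (k + r)) (transformComponent ω r m a k)
      = ∑ p ∈ S, ((1 - ω) ^ (p.1 - p.2 + r)) (term p) := by
        rw [← sum_fiberwise_of_maps_to fun _ => sub_mem_range_of_mem_sigma_range]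
        refine sum_congr rfl fun k _ => ?_
        rw [transformComponent, map_sum]
        exact sum_congr rfl fun p hp => by rw [(mem_filter.1 hp).2]
    _ = ∑ p ∈ S, ((1 - ω) ^ (p.1 + r - p.2)) (term p) := sum_congr rfl fun p hp => by
        simp only [S, mem_sigma, mem_range] at hp
        rw [Nat.sub_add_comm (by omega)]
    _ = ∑ ℓ ∈ range (m + 1), a ℓ := by
        simp only [S, term, sum_sigma, map_nsmul]
        exact sum_congr rfl fun ℓ _ => Module.End.sum_choose_smul_one_sub_pow_apply
          (Module.End.pow_succ_apply_eq_zero hω hω0 (ha ℓ)) (ℓ + r)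

end

/-- Lemma 5.1 ("mangel"): inversion of the transform `a ↦ Σ (1+ω)^{ℓ+r} a_ℓ`
in a graded ℂ-algebra with a degree-lowering operator ω. -/
theorem stmt0 (R : Type*) [CommRing R] [Algebra ℂ R]
    (A : ℕ → Submodule ℂ R) (hA : DirectSum.IsInternal A)
    (ω : Module.End ℂ R)
    (hω : ∀ ℓ : ℕ, ∀ x ∈ A (ℓ + 1), ω x ∈ A ℓ)
    (hω0 : ∀ x ∈ A 0, ω x = 0)
    (r m : ℕ) (a b : ℕ → R)
    (ha : ∀ ℓ, a ℓ ∈ A ℓ) (hb : ∀ k, b k ∈ A k)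
    (h : ∑ k ∈ Finset.range (m + 1), b k
        = ∑ ℓ ∈ Finset.range (m + 1), ((1 + ω) ^ (ℓ + r)) (a ℓ)) :
    ∑ ℓ ∈ Finset.range (m + 1), a ℓ
      = ∑ k ∈ Finset.range (m + 1), ((1 - ω) ^ (k + r)) (b k) := by
  have hb_eq : ∀ k ∈ range (m + 1), b k = transformComponent ω r m a k :=
    (iSupIndep_iff_finsetSum_eq_imp_eq A).1 hA.submodule_iSupIndep _ _ _
      (fun k _ => ⟨hb k, transformComponent_mem hω hω0 ha r m k⟩)
      (h.trans (sum_transformComponent hω hω0 ha r m).symm)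
  rw [← sum_one_sub_pow_apply_transformComponent hω hω0 ha r m]
  exact sum_congr rfl fun k hk => by rw [hb_eq k hk]
end

section
/- Let A = ⊕_{ℓ≥0} A_ℓ be a graded ℂ-algebra and ω : A → A a linear map with ω(A_{ℓ+1}) ⊆ A_ℓ and ω(A_0) = 0. Then the operators T_ω and T_{-ω} on finite graded sums, defined by T_ω(Σ_ℓ a_ℓ) = Σ_ℓ (1+ω)^{ℓ+r} a_ℓ for a fixed integer r ≥ 0, satisfy T_{-ω} ∘ T_ω = Id on ⊕_{ℓ=0}^m A_ℓ for every m. -/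
/-!
For `x ∈ A_l` with `l ≤ m` and `n = l + r`, binomial expansion gives
`T_ω x = (1 + ω)^n x = ∑_j C(n, j) ω^j x` with `ω^j x ∈ A_{l-j}`, so
`T_{-ω} T_ω x = ∑_j C(n, j) (1 - ω)^{n-j} ω^j x = (ω + (1 - ω))^n x = x`;
the terms with `j > l` vanish since `ω^j x = 0`. Both operators are linear, so this extends
from the homogeneous pieces to `⨁_{ℓ ≤ m} A_ℓ`.
-/

open DirectSum Finset

theorem Module.End.add_pow_apply {𝕜 M : Type*} [Semiring 𝕜] [AddCommMonoid M] [Module 𝕜 M]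
    {f g : Module.End 𝕜 M} (h : Commute f g) (n : ℕ) (v : M) :
    ((f + g) ^ n) v = ∑ j ∈ range (n + 1), n.choose j • (g ^ (n - j)) ((f ^ j) v) := by
  rw [h.add_pow, LinearMap.sum_apply]
  refine sum_congr rfl fun j _ => ?_
  rw [(h.pow_pow j (n - j)).eq, ← Nat.cast_comm, ← nsmul_eq_mul, LinearMap.smul_apply,
    Module.End.mul_apply]

section Lowering

variable {𝕜 M : Type*} [Semiring 𝕜] [AddCommMonoid M] [Module 𝕜 M]
  {A : ℕ → Submodule 𝕜 M} {σ : Module.End 𝕜 M}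

theorem pow_apply_mem_sub (hσ : ∀ ℓ, ∀ x ∈ A (ℓ + 1), σ x ∈ A ℓ)
    {l : ℕ} {x : M} (hx : x ∈ A l) {i : ℕ} (hi : i ≤ l) : (σ ^ i) x ∈ A (l - i) := by
  induction i with
  | zero => simpa using hx
  | succ i ih =>
    rw [pow_succ', Module.End.mul_apply]
    exact hσ _ _ (by simpa [show l - i = l - (i + 1) + 1 by omega] using ih (by omega))

theorem pow_apply_eq_zero_of_lt
    (hσ : ∀ ℓ, ∀ x ∈ A (ℓ + 1), σ x ∈ A ℓ) (hσ0 : ∀ x ∈ A 0, σ x = 0)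
    {l : ℕ} {x : M} (hx : x ∈ A l) {i : ℕ} (hi : l < i) : (σ ^ i) x = 0 := by
  obtain ⟨k, rfl⟩ := Nat.exists_eq_add_of_lt hi
  rw [show l + k + 1 = k + 1 + l by omega, pow_add, Module.End.mul_apply, pow_succ,
    Module.End.mul_apply, hσ0 _ (by simpa using pow_apply_mem_sub hσ hx le_rfl), map_zero]

theorem iSup_range_mem_invtSubmodule
    (hσ : ∀ ℓ, ∀ x ∈ A (ℓ + 1), σ x ∈ A ℓ) (hσ0 : ∀ x ∈ A 0, σ x = 0) (m : ℕ) :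
    (⨆ ℓ ∈ range (m + 1), A ℓ) ∈ σ.invtSubmodule := by
  refine (Module.End.mem_invtSubmodule σ).2 (iSup₂_le fun ℓ hℓ x hx => ?_)
  rw [Submodule.mem_comap]
  cases ℓ with
  | zero => simp [hσ0 x hx]
  | succ ℓ =>
    exact Submodule.mem_iSup_of_mem ℓ
      (Submodule.mem_iSup_of_mem (by simp at hℓ ⊢; omega) (hσ ℓ x hx))

theorem one_add_pow_mem_invtSubmodule {p : Submodule 𝕜 M} (hp : p ∈ σ.invtSubmodule) (n : ℕ) :
    p ∈ ((1 + σ) ^ n).invtSubmodule := by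
  induction n with
  | zero => simp
  | succ n ih =>
    exact Module.End.invtSubmodule.comp _ ih
      (Module.End.invtSubmodule_inf_invtSubmodule_le_invtSubmodule_add _ _ ⟨by simp, hp⟩)

end Lowering

section Twist

variable {𝕜 M : Type*} [Semiring 𝕜] [AddCommGroup M] [Module 𝕜 M]
  (A : ℕ → Submodule 𝕜 M) [Decomposition A]

def gradedProj (ℓ : ℕ) : Module.End 𝕜 M :=
  (A ℓ).subtype ∘ₗ component 𝕜 ℕ (fun i => A i) ℓ ∘ₗ (decomposeLinearEquiv A).toLinearMap

theorem gradedProj_apply (ℓ : ℕ) (x : M) : gradedProj A ℓ x = decompose A x ℓ := rfl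

/-- The operator `T_σ` of the paper, truncated to the degrees `0, …, m`. -/
def gradedTwist (σ : Module.End 𝕜 M) (r m : ℕ) : Module.End 𝕜 M :=
  ∑ ℓ ∈ range (m + 1), (1 + σ) ^ (ℓ + r) * gradedProj A ℓ

variable {A}

theorem gradedTwist_apply (σ : Module.End 𝕜 M) (r m : ℕ) (x : M) :
    gradedTwist A σ r m x = ∑ ℓ ∈ range (m + 1), ((1 + σ) ^ (ℓ + r)) (decompose A x ℓ : M) := by
  simp [gradedTwist, LinearMap.sum_apply, gradedProj_apply]

theorem gradedTwist_apply_of_mem (σ : Module.End 𝕜 M) {r m l : ℕ} (hl : l ≤ m) {x : M}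
    (hx : x ∈ A l) : gradedTwist A σ r m x = ((1 + σ) ^ (l + r)) x := by
  rw [gradedTwist_apply, sum_eq_single_of_mem l (by simpa [Nat.lt_succ_iff] using hl),
    decompose_of_mem_same A hx]
  intro k _ hk
  rw [decompose_of_mem_ne A hx (Ne.symm hk), map_zero]

theorem gradedTwist_mem {σ : Module.End 𝕜 M}
    (hσ : ∀ ℓ, ∀ x ∈ A (ℓ + 1), σ x ∈ A ℓ) (hσ0 : ∀ x ∈ A 0, σ x = 0) (r m : ℕ) (x : M) :
    gradedTwist A σ r m x ∈ ⨆ ℓ ∈ range (m + 1), A ℓ := by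
  rw [gradedTwist_apply]
  refine Submodule.sum_mem _ fun ℓ hℓ => one_add_pow_mem_invtSubmodule
    (iSup_range_mem_invtSubmodule hσ hσ0 m) _ ?_
  exact Submodule.mem_iSup_of_mem ℓ (Submodule.mem_iSup_of_mem hℓ (decompose A x ℓ).2)

theorem gradedTwist_neg_gradedTwist_of_mem {σ : Module.End 𝕜 M}
    (hσ : ∀ ℓ, ∀ x ∈ A (ℓ + 1), σ x ∈ A ℓ) (hσ0 : ∀ x ∈ A 0, σ x = 0) {r m l : ℕ} (hl : l ≤ m)
    {x : M} (hx : x ∈ A l) : gradedTwist A (-σ) r m (gradedTwist A σ r m x) = x := by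
  have hterm : ∀ j ∈ range (l + r + 1), gradedTwist A (-σ) r m ((σ ^ j) x) =
      ((1 + -σ) ^ (l + r - j)) ((σ ^ j) x) := by
    intro j _
    rcases le_or_gt j l with hj | hj
    · rw [gradedTwist_apply_of_mem _ (by omega) (pow_apply_mem_sub hσ hx hj),
        show l - j + r = l + r - j by omega]
    · rw [pow_apply_eq_zero_of_lt hσ hσ0 hx hj, map_zero, map_zero]
  calc gradedTwist A (-σ) r m (gradedTwist A σ r m x)
      = ∑ j ∈ range (l + r + 1), (l + r).choose j • gradedTwist A (-σ) r m ((σ ^ j) x) := by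
        rw [gradedTwist_apply_of_mem σ hl hx, add_comm 1 σ,
          Module.End.add_pow_apply (Commute.one_right σ), map_sum]
        simp only [one_pow, Module.End.one_apply, map_nsmul]
    _ = ((σ + (1 + -σ)) ^ (l + r)) x := by
        rw [Module.End.add_pow_apply ((Commute.one_right σ).add_right (Commute.refl σ).neg_right)]
        exact sum_congr rfl fun j hj => by rw [hterm j hj]
    _ = x := by rw [show σ + (1 + -σ) = 1 by abel, one_pow, Module.End.one_apply]

theorem gradedTwist_neg_gradedTwist {σ : Module.End 𝕜 M}
    (hσ : ∀ ℓ, ∀ x ∈ A (ℓ + 1), σ x ∈ A ℓ) (hσ0 : ∀ x ∈ A 0, σ x = 0) (r m : ℕ) {x : M}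
    (hx : x ∈ ⨆ ℓ ∈ range (m + 1), A ℓ) :
    gradedTwist A (-σ) r m (gradedTwist A σ r m x) = x := by
  suffices (⨆ ℓ ∈ range (m + 1), A ℓ) ≤
      LinearMap.eqLocus (gradedTwist A (-σ) r m * gradedTwist A σ r m) 1 from this hx
  exact iSup₂_le fun l hl y hy =>
    gradedTwist_neg_gradedTwist_of_mem hσ hσ0 (Nat.lt_succ_iff.1 (mem_range.1 hl)) hy

end Twist

/-- `T_{-ω} ∘ T_ω = Id` on `⊕_{ℓ=0}^m A_ℓ`, where
`T_σ x = Σ_ℓ (1+σ)^{ℓ+r} x_ℓ` in terms of the graded decomposition. -/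
theorem stmt1 (R : Type*) [CommRing R] [Algebra ℂ R]
    (A : ℕ → Submodule ℂ R) [DirectSum.Decomposition A]
    (ω : Module.End ℂ R)
    (hω : ∀ ℓ : ℕ, ∀ x ∈ A (ℓ + 1), ω x ∈ A ℓ)
    (hω0 : ∀ x ∈ A 0, ω x = 0)
    (r m : ℕ)
    (T : Module.End ℂ R → R → R)
    (hT : ∀ σ : Module.End ℂ R, ∀ x ∈ ⨆ ℓ ∈ Finset.range (m + 1), A ℓ,
      T σ x = ∑ ℓ ∈ Finset.range (m + 1),
        ((1 + σ) ^ (ℓ + r)) (DirectSum.decompose A x ℓ : R)) :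
    ∀ x ∈ ⨆ ℓ ∈ Finset.range (m + 1), A ℓ, T (-ω) (T ω x) = x := by
  intro x hx
  rw [hT ω x hx, ← gradedTwist_apply, hT (-ω) _ (gradedTwist_mem hω hω0 r m x),
    ← gradedTwist_apply]
  exact gradedTwist_neg_gradedTwist hω hω0 r m hx
end
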